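/- arXiv:2502.02898 — 2 statements merged into one kernel-verified Lean document; each statement's English description precedes it below -/
import Mathlib

section
/- Let f be in the class BT_B with Taylor coefficients a_n, and let Γ_2 = −(1/2)(a_3 − (3/2)a_2²) be the second logarithmic coefficient of the inverse function of f. Then |Γ_2| ≤ 1/12. -/
/-!
Write `ω z = c₁ z + c₂ z² + ⋯` and `G w = (1 + tanh w)^{1/2}`, so that `f' = G ∘ ω` with
`G 0 = 1`, `G' 0 = 1/2`, `G'' 0 = -1/4`. The chain rule gives `a₂ = c₁/4` and
`a₃ = (c₂ - c₁²/4)/6`, hence `Γ₂ = 13 c₁²/192 - c₂/12`. The Schwarz–Pick estimate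
`|c₂| ≤ 1 - |c₁|²` for the Schwarz function `ω` then yields `|Γ₂| ≤ 1/12 - |c₁|²/64`.
-/

open Complex Metric

/-- Principal branch of the square root: `w^(1/2) = exp((1/2) * Log w)`. -/
noncomputable def psqrt (w : ℂ) : ℂ := Complex.exp ((1/2 : ℂ) * Complex.log w)

/-- The `n`-th Taylor coefficient of `f` at `0`, i.e. `f^(n)(0)/n!`. -/
noncomputable def tCoeff (f : ℂ → ℂ) (n : ℕ) : ℂ := iteratedDeriv n f 0 / n.factorial

/-- The class `BT_B` of bounded turning functions associated with the bean-shaped domain: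
`f` is analytic on the unit disk, `f 0 = 0`, `f' 0 = 1`, `f` injective on the disk,
and `f'(z) = (1 + tanh (ω z))^(1/2)` for a Schwarz function `ω`. -/
def IsBTB (f : ℂ → ℂ) : Prop :=
  AnalyticOnNhd ℂ f (ball 0 1) ∧ f 0 = 0 ∧ deriv f 0 = 1 ∧
  Set.InjOn f (ball 0 1) ∧
  ∃ ω : ℂ → ℂ, AnalyticOnNhd ℂ ω (ball 0 1) ∧ ω 0 = 0 ∧
    (∀ z ∈ ball (0:ℂ) 1, ‖ω z‖ < 1) ∧
    (∀ z ∈ ball (0:ℂ) 1, deriv f z = psqrt (1 + Complex.tanh (ω z)))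

open Filter Topology Set ComplexConjugate

section

variable {𝕜 : Type*} [NontriviallyNormedField 𝕜] [CompleteSpace 𝕜]

theorem deriv_deriv_comp {G ω : 𝕜 → 𝕜} {x : 𝕜} (hG : AnalyticAt 𝕜 G (ω x))
    (hω : AnalyticAt 𝕜 ω x) :
    deriv (deriv (G ∘ ω)) x =
      deriv (deriv G) (ω x) * deriv ω x ^ 2 + deriv G (ω x) * deriv (deriv ω) x := by
  have hchain : deriv (G ∘ ω) =ᶠ[𝓝 x] fun y => deriv G (ω y) * deriv ω y := by
    filter_upwards [hω.eventually_analyticAt, hω.continuousAt.eventually hG.eventually_analyticAt]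
      with y hωy hGy
    exact deriv_comp y hGy.differentiableAt hωy.differentiableAt
  have hprod : HasDerivAt (fun y => deriv G (ω y) * deriv ω y)
      (deriv (deriv G) (ω x) * deriv ω x * deriv ω x + deriv G (ω x) * deriv (deriv ω) x) x :=
    (hG.deriv.differentiableAt.hasDerivAt.comp x hω.differentiableAt.hasDerivAt).fun_mul
      hω.deriv.differentiableAt.hasDerivAt
  rw [hchain.deriv_eq, hprod.deriv]
  ring

theorem deriv_deriv_id_mul_zero {φ : 𝕜 → 𝕜} (hφ : AnalyticAt 𝕜 φ 0) :
    deriv (deriv fun z => z * φ z) 0 = 2 * deriv φ 0 := by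
  have hprod : deriv (fun z => z * φ z) =ᶠ[𝓝 0] fun z => φ z + z * deriv φ z := by
    filter_upwards [hφ.eventually_analyticAt] with z hz
    simpa using ((hasDerivAt_id' z).fun_mul hz.differentiableAt.hasDerivAt).deriv
  have hsum : HasDerivAt (fun z => φ z + z * deriv φ z)
      (deriv φ 0 + (1 * deriv φ 0 + 0 * deriv (deriv φ) 0)) 0 :=
    hφ.differentiableAt.hasDerivAt.fun_add
      ((hasDerivAt_id' 0).fun_mul hφ.deriv.differentiableAt.hasDerivAt)
  rw [hprod.deriv_eq, hsum.deriv]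
  ring

end

noncomputable def blaschkeFactor (b w : ℂ) : ℂ := (w - b) / (1 - conj b * w)

lemma one_sub_conj_mul_ne_zero {b w : ℂ} (hb : ‖b‖ < 1) (hw : ‖w‖ ≤ 1) :
    1 - conj b * w ≠ 0 := by
  have : ‖conj b * w‖ < 1 := by
    rw [norm_mul, Complex.norm_conj]
    nlinarith [norm_nonneg b, norm_nonneg w]
  intro h
  rw [← sub_eq_zero.mp h, norm_one] at this
  exact lt_irrefl _ this

lemma blaschkeFactor_self (b : ℂ) : blaschkeFactor b b = 0 := by
  simp [blaschkeFactor]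

lemma norm_blaschkeFactor_le_one {b w : ℂ} (hb : ‖b‖ < 1) (hw : ‖w‖ ≤ 1) :
    ‖blaschkeFactor b w‖ ≤ 1 := by
  have hnormSq : normSq (1 - conj b * w) - normSq (w - b) = (1 - normSq w) * (1 - normSq b) := by
    simp only [normSq_apply, sub_re, sub_im, mul_re, mul_im, one_re, one_im, conj_re, conj_im]
    ring
  have hsq : normSq (w - b) ≤ normSq (1 - conj b * w) := by
    rw [← sub_nonneg, hnormSq, normSq_eq_norm_sq, normSq_eq_norm_sq]
    apply mul_nonneg <;> nlinarith [norm_nonneg b, norm_nonneg w]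
  rw [blaschkeFactor, norm_div, div_le_one (norm_pos_iff.2 (one_sub_conj_mul_ne_zero hb hw))]
  rw [normSq_eq_norm_sq, normSq_eq_norm_sq] at hsq
  exact pow_le_pow_iff_left₀ (norm_nonneg _) (norm_nonneg _) two_ne_zero |>.1 hsq

lemma hasDerivAt_blaschkeFactor_self {b : ℂ} (hb : ‖b‖ < 1) :
    HasDerivAt (blaschkeFactor b) (1 / (1 - ‖b‖ ^ 2 : ℝ)) b := by
  have hne := one_sub_conj_mul_ne_zero hb hb.le
  have hreal : 1 - conj b * b = ((1 - ‖b‖ ^ 2 : ℝ) : ℂ) := by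
    rw [ofReal_sub, ofReal_one, ofReal_pow, conj_mul']
  refine (((hasDerivAt_id b).sub_const b).div
    (((hasDerivAt_id b).const_mul (conj b)).const_sub 1) hne).congr_deriv ?_
  simp only [id_eq, sub_self, zero_mul, sub_zero, one_mul, hreal]
  field_simp

theorem norm_deriv_le_one_sub_norm_sq_of_mapsTo_closedBall {φ : ℂ → ℂ}
    (hd : DifferentiableOn ℂ φ (ball 0 1)) (hmaps : MapsTo φ (ball 0 1) (closedBall 0 1)) :
    ‖deriv φ 0‖ ≤ 1 - ‖φ 0‖ ^ 2 := by
  have h0 : (0 : ℂ) ∈ ball (0 : ℂ) 1 := mem_ball_self one_pos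
  have hφ0 : ‖φ 0‖ ≤ 1 := mem_closedBall_zero_iff.1 (hmaps h0)
  obtain hlt | heq := hφ0.lt_or_eq
  · set b := φ 0
    have hψ : MapsTo (blaschkeFactor b ∘ φ) (ball 0 1)
        (closedBall ((blaschkeFactor b ∘ φ) 0) 1) := by
      rw [Function.comp_apply, blaschkeFactor_self]
      exact fun z hz => mem_closedBall_zero_iff.2
        (norm_blaschkeFactor_le_one hlt (mem_closedBall_zero_iff.1 (hmaps hz)))
    have hbd : DifferentiableOn ℂ (blaschkeFactor b) (closedBall 0 1) := fun w hw =>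
      ((differentiableAt_id.sub_const b).div ((differentiableAt_id.const_mul _).const_sub 1)
        (one_sub_conj_mul_ne_zero hlt (mem_closedBall_zero_iff.1 hw))).differentiableWithinAt
    have hschwarz := Complex.norm_deriv_le_div_of_mapsTo_ball (hbd.comp hd hmaps) hψ one_pos
    have hchain : HasDerivAt (blaschkeFactor b ∘ φ) (1 / (1 - ‖b‖ ^ 2 : ℝ) * deriv φ 0) 0 :=
      (hasDerivAt_blaschkeFactor_self hlt).comp 0
        (hd.differentiableAt (isOpen_ball.mem_nhds h0)).hasDerivAt
    have hpos : 0 < 1 - ‖b‖ ^ 2 := by nlinarith [norm_nonneg b]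
    rw [hchain.deriv, norm_mul, norm_div, norm_one, norm_real, Real.norm_of_nonneg hpos.le,
      div_one, one_div_mul_eq_div, div_le_one hpos] at hschwarz
    exact hschwarz
  · have hmax : IsLocalMax (norm ∘ φ) 0 :=
      (isOpen_ball.eventually_mem h0).mono fun z hz => by
        simpa [heq] using mem_closedBall_zero_iff.1 (hmaps hz)
    have hconst : φ =ᶠ[𝓝 0] fun _ => φ 0 := Complex.eventually_eq_of_isLocalMax_norm
      ((isOpen_ball.eventually_mem h0).mono fun z hz =>
        hd.differentiableAt (isOpen_ball.mem_nhds hz)) hmax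
    rw [hconst.deriv_eq, deriv_const, norm_zero, heq]
    norm_num

theorem norm_deriv_deriv_le_of_mapsTo_ball {ω : ℂ → ℂ} (hd : DifferentiableOn ℂ ω (ball 0 1))
    (h0 : ω 0 = 0) (hmaps : MapsTo ω (ball 0 1) (ball 0 1)) :
    ‖deriv (deriv ω) 0‖ ≤ 2 * (1 - ‖deriv ω 0‖ ^ 2) := by
  have hball : ball (0 : ℂ) 1 ∈ 𝓝 0 := ball_mem_nhds 0 one_pos
  set φ := dslope ω 0
  have hφd : DifferentiableOn ℂ φ (ball 0 1) := (differentiableOn_dslope hball).2 hd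
  have hωmaps : MapsTo ω (ball 0 1) (closedBall (ω 0) 1) := fun z hz => by
    rw [h0]
    exact ball_subset_closedBall (hmaps hz)
  have hφmaps : MapsTo φ (ball 0 1) (closedBall 0 1) := fun z hz => by
    simpa using Complex.norm_dslope_le_div_of_mapsTo_ball hd hωmaps hz
  have hωφ : ω = fun z => z * φ z := funext fun z => by
    simpa [h0] using (sub_smul_dslope ω 0 z).symm
  have h1 : deriv ω 0 = φ 0 := (dslope_same ω 0).symm
  have h2 : deriv (deriv ω) 0 = 2 * deriv φ 0 := by
    rw [hωφ]
    exact deriv_deriv_id_mul_zero (hφd.analyticAt hball)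
  rw [h1, h2, norm_mul, Complex.norm_two]
  gcongr
  exact norm_deriv_le_one_sub_norm_sq_of_mapsTo_closedBall hφd hφmaps

lemma Complex.hasDerivAt_tanh {w : ℂ} (h : cosh w ≠ 0) :
    HasDerivAt tanh (1 - tanh w ^ 2) w := by
  have hquot := (hasDerivAt_sinh w).fun_div (hasDerivAt_cosh w) h
  rw [show (fun z => sinh z / cosh z) = tanh from funext fun z => (tanh_eq_sinh_div_cosh z).symm]
    at hquot
  refine hquot.congr_deriv ?_
  rw [tanh_eq_sinh_div_cosh]
  field_simp

noncomputable def sqrtOneAddTanh (w : ℂ) : ℂ := psqrt (1 + tanh w)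

lemma sqrtOneAddTanh_zero : sqrtOneAddTanh 0 = 1 := by
  simp [sqrtOneAddTanh, psqrt]

lemma hasDerivAt_sqrtOneAddTanh {w : ℂ} (hcosh : cosh w ≠ 0) (hslit : 1 + tanh w ∈ slitPlane) :
    HasDerivAt sqrtOneAddTanh (sqrtOneAddTanh w * (1 - tanh w) / 2) w := by
  have hexp := ((((hasDerivAt_tanh hcosh).const_add 1).clog hslit).const_mul (1 / 2 : ℂ)).cexp
  refine hexp.congr_deriv ?_
  have hne : 1 + tanh w ≠ 0 := slitPlane_ne_zero hslit
  rw [sqrtOneAddTanh, psqrt]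
  field_simp
  ring

lemma eventually_cosh_ne_zero_and_one_add_tanh_mem_slitPlane :
    ∀ᶠ w in 𝓝 (0 : ℂ), cosh w ≠ 0 ∧ 1 + tanh w ∈ slitPlane := by
  have hcosh : ∀ᶠ w in 𝓝 (0 : ℂ), cosh w ≠ 0 :=
    continuous_cosh.continuousAt.eventually_ne (by simp)
  have htanh : ContinuousAt (fun w => 1 + tanh w) 0 := by
    simp only [tanh_eq_sinh_div_cosh]
    exact continuousAt_const.add
      (continuous_sinh.continuousAt.div continuous_cosh.continuousAt (by simp))
  exact hcosh.and (htanh.eventually_mem (isOpen_slitPlane.mem_nhds (by simp)))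

lemma deriv_sqrtOneAddTanh_eventuallyEq :
    deriv sqrtOneAddTanh =ᶠ[𝓝 0] fun w => sqrtOneAddTanh w * (1 - tanh w) / 2 :=
  eventually_cosh_ne_zero_and_one_add_tanh_mem_slitPlane.mono fun _ hw =>
    (hasDerivAt_sqrtOneAddTanh hw.1 hw.2).deriv

lemma analyticAt_sqrtOneAddTanh_zero : AnalyticAt ℂ sqrtOneAddTanh 0 :=
  analyticAt_iff_eventually_differentiableAt.2 <|
    eventually_cosh_ne_zero_and_one_add_tanh_mem_slitPlane.mono fun _ hw =>
      (hasDerivAt_sqrtOneAddTanh hw.1 hw.2).differentiableAt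

lemma deriv_sqrtOneAddTanh_zero : deriv sqrtOneAddTanh 0 = 1 / 2 := by
  rw [deriv_sqrtOneAddTanh_eventuallyEq.eq_of_nhds, sqrtOneAddTanh_zero]
  simp

lemma deriv_deriv_sqrtOneAddTanh_zero : deriv (deriv sqrtOneAddTanh) 0 = -1 / 4 := by
  obtain ⟨hcosh, hslit⟩ := eventually_cosh_ne_zero_and_one_add_tanh_mem_slitPlane.self_of_nhds
  have hprod := ((hasDerivAt_sqrtOneAddTanh hcosh hslit).fun_mul
    ((hasDerivAt_tanh hcosh).const_sub 1)).div_const 2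
  rw [deriv_sqrtOneAddTanh_eventuallyEq.deriv_eq, hprod.deriv, sqrtOneAddTanh_zero]
  norm_num

lemma tCoeff_two_eq_of_deriv_eventuallyEq_comp {f G ω : ℂ → ℂ} (h : deriv f =ᶠ[𝓝 0] G ∘ ω)
    (hG : DifferentiableAt ℂ G (ω 0)) (hω : DifferentiableAt ℂ ω 0) :
    tCoeff f 2 = deriv G (ω 0) * deriv ω 0 / 2 := by
  rw [tCoeff, iteratedDeriv_succ, iteratedDeriv_one, h.deriv_eq, deriv_comp 0 hG hω]
  norm_num [Nat.factorial]

lemma tCoeff_three_eq_of_deriv_eventuallyEq_comp {f G ω : ℂ → ℂ} (h : deriv f =ᶠ[𝓝 0] G ∘ ω)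
    (hG : AnalyticAt ℂ G (ω 0)) (hω : AnalyticAt ℂ ω 0) :
    tCoeff f 3 =
      (deriv (deriv G) (ω 0) * deriv ω 0 ^ 2 + deriv G (ω 0) * deriv (deriv ω) 0) / 6 := by
  rw [tCoeff, iteratedDeriv_succ, iteratedDeriv_succ, iteratedDeriv_one, h.deriv.deriv_eq,
    deriv_deriv_comp hG hω]
  norm_num [Nat.factorial]

theorem BTB_Gamma2_bound (f : ℂ → ℂ) (hf : IsBTB f) :
    ‖-(1/2) * (tCoeff f 3 - (3/2) * (tCoeff f 2)^2)‖ ≤ 1/12 := by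
  obtain ⟨-, -, -, -, ω, hωa, hω0, hωlt, hfω⟩ := hf
  have h0 : (0 : ℂ) ∈ ball (0 : ℂ) 1 := mem_ball_self one_pos
  have hderiv : deriv f =ᶠ[𝓝 0] sqrtOneAddTanh ∘ ω :=
    (isOpen_ball.eventually_mem h0).mono hfω
  have hG : AnalyticAt ℂ sqrtOneAddTanh (ω 0) := by
    rw [hω0]
    exact analyticAt_sqrtOneAddTanh_zero
  have hpick := norm_deriv_deriv_le_of_mapsTo_ball hωa.differentiableOn hω0
    fun z hz => mem_ball_zero_iff.2 (hωlt z hz)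
  rw [tCoeff_three_eq_of_deriv_eventuallyEq_comp hderiv hG (hωa 0 h0),
    tCoeff_two_eq_of_deriv_eventuallyEq_comp hderiv hG.differentiableAt
      (hωa 0 h0).differentiableAt, hω0, deriv_sqrtOneAddTanh_zero,
    deriv_deriv_sqrtOneAddTanh_zero]
  set c := deriv ω 0
  set d := deriv (deriv ω) 0
  calc ‖-(1/2) * ((-1/4 * c ^ 2 + 1/2 * d) / 6 - 3/2 * (1/2 * c / 2) ^ 2)‖
      = ‖13/192 * c ^ 2 - d / 24‖ := by ring_nf
    _ ≤ 13/192 * ‖c‖ ^ 2 + ‖d‖ / 24 := by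
      refine (norm_sub_le _ _).trans_eq ?_
      norm_num
    _ ≤ 1/12 := by nlinarith [norm_nonneg c]
end

section
/- Let f be in the class BT_B with Taylor coefficients a_n, and let γ_1 = a_2/2, γ_2 = (1/2)(a_3 − a_2²/2) be its first two logarithmic coefficients. Then |γ_2| − |γ_1| ≤ 1/12. -/
open Complex Metric

/-!
Squaring the defining relation removes the branch of the square root: near `0` we have
`(f')² = 1 + tanh ∘ ω`. Since `f'(0) = 1`, `tanh'(0) = 1` and `tanh''(0) = 0` (`tanh` is odd),
comparing first and second derivatives of both sides at `0` gives `a₂ = ω'(0)/4` and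
`a₃ = ω''(0)/12 - ω'(0)²/24`, hence `γ₁ = ω'(0)/8` and `γ₂ = ω''(0)/24 - 7ω'(0)²/192`.
Cauchy's estimates for the Schwarz function give `|ω'(0)| ≤ 1` and `|ω''(0)| ≤ 2`, so with
`t = |ω'(0)|` we get `|γ₂| - |γ₁| ≤ 1/12 + t (7t - 24)/192 ≤ 1/12`.
-/

open Filter Topology

theorem Function.Odd.iteratedDeriv_zero_of_even {𝕜 F : Type*} [NontriviallyNormedField 𝕜]
    [CharZero 𝕜] [NormedAddCommGroup F] [NormedSpace 𝕜 F] {f : 𝕜 → F} (hf : f.Odd) {n : ℕ}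
    (hn : Even n) : iteratedDeriv n f 0 = 0 := by
  have h := iteratedDeriv_comp_neg n f 0
  simp only [hf _, iteratedDeriv_fun_neg, neg_zero, hn.neg_one_pow, one_smul] at h
  have : (2 : 𝕜) • iteratedDeriv n f 0 = 0 := by
    rw [two_smul]
    nth_rewrite 1 [← h]
    exact neg_add_cancel _
  simpa using this

namespace Complex

lemma hasDerivAt_tanh_s9 {x : ℂ} (hx : cosh x ≠ 0) : HasDerivAt tanh (1 / cosh x ^ 2) x := by
  rw [show tanh = fun z => sinh z / cosh z from funext tanh_eq_sinh_div_cosh]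
  refine ((hasDerivAt_sinh x).div (hasDerivAt_cosh x) hx).congr_deriv ?_
  rw [← cosh_sq_sub_sinh_sq x]
  ring

lemma contDiffAt_tanh {x : ℂ} (hx : cosh x ≠ 0) {n : WithTop ℕ∞} : ContDiffAt ℂ n tanh x := by
  rw [show tanh = fun z => sinh z / cosh z from funext tanh_eq_sinh_div_cosh]
  exact contDiff_sinh.contDiffAt.div contDiff_cosh.contDiffAt hx

theorem norm_iteratedDeriv_le_of_forall_mem_ball_norm_le {F : Type*} [NormedAddCommGroup F]
    [NormedSpace ℂ F] [CompleteSpace F] {g : ℂ → F} {c : ℂ} {R C : ℝ} (n : ℕ) (hR : 0 < R)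
    (hg : DifferentiableOn ℂ g (ball c R)) (hC : ∀ z ∈ ball c R, ‖g z‖ ≤ C) :
    ‖iteratedDeriv n g c‖ ≤ n.factorial * C / R ^ n := by
  have hlim : Tendsto (fun r : ℝ => n.factorial * C / r ^ n) (𝓝[<] R)
      (𝓝 (n.factorial * C / R ^ n)) :=
    (continuousAt_const.div (continuousAt_id.pow n) (pow_ne_zero n hR.ne')).tendsto.mono_left
      nhdsWithin_le_nhds
  refine ge_of_tendsto hlim ?_
  filter_upwards [Ioo_mem_nhdsLT hR] with r ⟨hr0, hrR⟩
  exact norm_iteratedDeriv_le_of_forall_mem_sphere_norm_le n hr0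
    (hg.diffContOnCl_ball (closedBall_subset_ball hrR))
    fun z hz => hC z (sphere_subset_closedBall.trans (closedBall_subset_ball hrR) hz)

end Complex

theorem deriv_comp_eq_and_iteratedDeriv_two_comp_eq {𝕜 : Type*} [NontriviallyNormedField 𝕜]
    {g h u v : 𝕜 → 𝕜} {x : 𝕜}
    (hg : ContDiffAt 𝕜 2 g (u x)) (hu : ContDiffAt 𝕜 2 u x)
    (hh : ContDiffAt 𝕜 2 h (v x)) (hv : ContDiffAt 𝕜 2 v x) (heq : g ∘ u =ᶠ[𝓝 x] h ∘ v) :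
    deriv g (u x) * deriv u x = deriv h (v x) * deriv v x ∧
    iteratedDeriv 2 g (u x) * deriv u x ^ 2 + deriv g (u x) * iteratedDeriv 2 u x =
      iteratedDeriv 2 h (v x) * deriv v x ^ 2 + deriv h (v x) * iteratedDeriv 2 v x := by
  have h2 : (2 : WithTop ℕ∞) ≠ 0 := by norm_num
  constructor
  · rw [← deriv_comp x (hg.differentiableAt h2) (hu.differentiableAt h2),
      ← deriv_comp x (hh.differentiableAt h2) (hv.differentiableAt h2)]
    exact heq.deriv_eq
  · rw [← iteratedDeriv_comp_two hg hu, ← iteratedDeriv_comp_two hh hv]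
    exact heq.iteratedDeriv_eq 2

lemma psqrt_sq {w : ℂ} (hw : w ≠ 0) : psqrt w ^ 2 = w := by
  rw [psqrt, ← Complex.exp_nat_mul, ← mul_assoc]
  norm_num
  exact Complex.exp_log hw

theorem tCoeff_two_three_of_deriv_eq_psqrt {f ω : ℂ → ℂ} (hf : AnalyticAt ℂ f 0)
    (hω : AnalyticAt ℂ ω 0) (hω0 : ω 0 = 0)
    (hfω : ∀ᶠ z in 𝓝 0, deriv f z = psqrt (1 + tanh (ω z))) :
    tCoeff f 2 = deriv ω 0 / 4 ∧
      tCoeff f 3 = iteratedDeriv 2 ω 0 / 12 - deriv ω 0 ^ 2 / 24 := by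
  have hcosh : cosh (ω 0) ≠ 0 := by simp [hω0]
  have htanh : ContDiffAt ℂ 2 (fun w => 1 + tanh w) (ω 0) :=
    contDiffAt_const.add (contDiffAt_tanh hcosh)
  have hne : ∀ᶠ z in 𝓝 0, 1 + tanh (ω z) ≠ 0 :=
    (htanh.continuousAt.comp hω.continuousAt).eventually_ne (by simp [hω0])
  have hsq : (· ^ 2) ∘ deriv f =ᶠ[𝓝 0] (fun w => 1 + tanh w) ∘ ω := by
    filter_upwards [hfω, hne] with z hz hz' using by simp [hz, psqrt_sq hz']
  have hu0 : deriv f 0 = 1 := by simp [hfω.self_of_nhds, hω0, psqrt]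
  have hd : deriv (fun w => 1 + tanh w) 0 = 1 := by
    rw [deriv_const_add, (hasDerivAt_tanh_s9 (x := 0) (by simp)).deriv]
    simp
  have hdd : iteratedDeriv 2 (fun w => 1 + tanh w) 0 = 0 := by
    rw [iteratedDeriv_const_add two_pos]
    exact Function.Odd.iteratedDeriv_zero_of_even tanh_neg even_two
  obtain ⟨h1, h2⟩ := deriv_comp_eq_and_iteratedDeriv_two_comp_eq (contDiff_id.pow 2).contDiffAt
    hf.deriv.contDiffAt htanh hω.contDiffAt hsq
  simp only [hu0, hω0, hd, hdd] at h1 h2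
  norm_num at h1 h2
  have e2 : iteratedDeriv 2 f 0 = deriv (deriv f) 0 := by simp [iteratedDeriv_succ']
  have e3 : iteratedDeriv 3 f 0 = iteratedDeriv 2 (deriv f) 0 := by rw [iteratedDeriv_succ']
  simp only [tCoeff, e2, e3]
  norm_num [Nat.factorial]
  constructor
  · linear_combination h1 / 4
  · linear_combination h2 / 12 - (deriv ω 0 + 2 * deriv (deriv f) 0) / 24 * h1

theorem BTB_gamma_diff_upper (f : ℂ → ℂ) (hf : IsBTB f) :
    ‖(1/2) * (tCoeff f 3 - (tCoeff f 2)^2 / 2)‖ - ‖tCoeff f 2 / 2‖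
      ≤ 1/12 := by
  obtain ⟨hfa, -, -, -, ω, hωa, hω0, hω1, hfω⟩ := hf
  have h0 : (0 : ℂ) ∈ ball (0 : ℂ) 1 := mem_ball_self one_pos
  obtain ⟨h2, h3⟩ := tCoeff_two_three_of_deriv_eq_psqrt (hfa 0 h0) (hωa 0 h0) hω0
    (eventually_of_mem (isOpen_ball.mem_nhds h0) hfω)
  have hcauchy (n : ℕ) : ‖iteratedDeriv n ω 0‖ ≤ n.factorial := by
    simpa using norm_iteratedDeriv_le_of_forall_mem_ball_norm_le n one_pos
      hωa.differentiableOn fun z hz => (hω1 z hz).le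
  have ha : ‖deriv ω 0‖ ≤ 1 := by simpa using hcauchy 1
  have hb : ‖iteratedDeriv 2 ω 0‖ ≤ 2 := by simpa using hcauchy 2
  rw [h2, h3]
  set a := deriv ω 0
  set b := iteratedDeriv 2 ω 0
  calc ‖(1/2) * ((b / 12 - a ^ 2 / 24) - (a / 4) ^ 2 / 2)‖ - ‖a / 4 / 2‖
      = ‖b / 24 - 7 / 192 * a ^ 2‖ - ‖a‖ / 8 := by
        congr 2
        · ring_nf
        · simp; ring
    _ ≤ ‖b‖ / 24 + 7 / 192 * ‖a‖ ^ 2 - ‖a‖ / 8 := by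
        gcongr
        exact (norm_sub_le _ _).trans_eq (by simp)
    _ ≤ 1 / 12 := by nlinarith [norm_nonneg a]
end
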